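/- arXiv:2303.10153 — 3 statements merged into one kernel-verified Lean document; each statement's English description precedes it below -/
import Mathlib

section
/- Let α, a > 0 and 0 ≤ t₀ < T*. Suppose y ∈ C¹([t₀,T*), ℝⁿ) satisfies y(t) ≠ 0 for all t, |y(t)| → ∞ as t → T*⁻, and y' = a|y|^α y + f(t) on (t₀,T*), where f is continuous with |f(t)| ≤ |y(t)|^{1+α} E₀(t) for an integrable E₀ : [t₀,T*) → [0,∞) satisfying (1/(T*−t))∫_t^{T*}E₀(τ)dτ → 0 as t → T*⁻. Then there exist constants C₁, C₂ > 0 such that C₁(T*−t)^{−1/α} ≤ |y(t)| ≤ C₂(T*−t)^{−1/α} for all t ∈ [t₀, T*). -/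
/-!
Along the solution, `g = ‖y‖ ^ (-α)` satisfies `g' = -α a - α ⟪y, f⟫ ‖y‖ ^ (-(α + 2))`, and the
last term is bounded by `α E₀`. Since `g → 0` at `T`, integrating over `[s, T)` gives
`|g s - α a (T - s)| ≤ α ∫_s^T E₀ = o(T - s)`, so `g s / (T - s) → α a > 0`. A continuous positive
function on `[t₀, T)` with a positive limit at `T` lies between two positive constants, and the
power `-1 / α` turns these bounds on `g / (T - ·)` into the two-sided estimate of `‖y‖`.
-/

open scoped Topology RealInnerProductSpace
open MeasureTheory Set Filter

theorem abs_sub_le_setIntegral_of_tendsto_nhdsLT {h h' E : ℝ → ℝ} {s T L : ℝ} (hs : s < T)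
    (hcont : ContinuousOn h (Ico s T)) (hderiv : ∀ t ∈ Ioo s T, HasDerivAt h (h' t) t)
    (hbound : ∀ t ∈ Ioo s T, |h' t| ≤ E t) (hE : IntegrableOn E (Ioo s T))
    (hlim : Tendsto h (𝓝[<] T) (𝓝 L)) :
    |h s - L| ≤ ∫ t in Ioo s T, E t := by
  have hE_nonneg : ∀ t ∈ Ioo s T, 0 ≤ E t := fun t ht => (abs_nonneg _).trans (hbound t ht)
  have hstep : ∀ t ∈ Ioo s T, |h t - h s| ≤ ∫ τ in Ioo s T, E τ := by
    intro t ht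
    have hsub : Ioo s t ⊆ Ioo s T := Ioo_subset_Ioo_right ht.2.le
    have hderiv' : ∀ x ∈ Ioo s t, HasDerivAt h (h' x) x := fun x hx => hderiv x (hsub hx)
    have hEint : IntegrableOn E (Icc s t) :=
      (integrableOn_Icc_iff_integrableOn_Ioo).mpr (hE.mono_set hsub)
    have hcont' : ContinuousOn h (Icc s t) := hcont.mono (Icc_subset_Ico_right ht.2)
    -- The one-sided FTC inequalities need no integrability of `h'`.
    have hup := intervalIntegral.sub_le_integral_of_hasDeriv_right_of_le ht.1.le hcont'
      (fun x hx => (hderiv' x hx).hasDerivWithinAt) hEint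
      (fun x hx => (le_abs_self _).trans (hbound x (hsub hx)))
    have hdown : -h t - -h s ≤ ∫ τ in s..t, E τ :=
      intervalIntegral.sub_le_integral_of_hasDeriv_right_of_le ht.1.le hcont'.neg
      (fun x hx => (hderiv' x hx).neg.hasDerivWithinAt) hEint
      (fun x hx => (neg_le_abs _).trans (hbound x (hsub hx)))
    have hmono : ∫ τ in s..t, E τ ≤ ∫ τ in Ioo s T, E τ := by
      rw [intervalIntegral.integral_of_le ht.1.le, integral_Ioc_eq_integral_Ioo]
      exact setIntegral_mono_set hE ((ae_restrict_iff' measurableSet_Ioo).mpr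
        (Eventually.of_forall hE_nonneg)) hsub.eventuallyLE
    rw [abs_le]
    constructor <;> linarith
  have hlim' : Tendsto (fun t => |h t - h s|) (𝓝[<] T) (𝓝 |L - h s|) :=
    (hlim.sub_const _).abs
  rw [abs_sub_comm]
  exact le_of_tendsto hlim' (eventually_of_mem (Ioo_mem_nhdsLT hs) hstep)

theorem tendsto_div_of_abs_sub_mul_le {g B : ℝ → ℝ} {T L : ℝ}
    (hB : ∀ᶠ s in 𝓝[<] T, |g s - L * (T - s)| ≤ B s)
    (hlim : Tendsto (fun s => B s / (T - s)) (𝓝[<] T) (𝓝 0)) :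
    Tendsto (fun s => g s / (T - s)) (𝓝[<] T) (𝓝 L) := by
  refine tendsto_sub_nhds_zero_iff.mp (squeeze_zero_norm' ?_ hlim)
  filter_upwards [hB, self_mem_nhdsWithin] with s hs hsT
  have hpos : 0 < T - s := sub_pos.mpr hsT
  rw [Real.norm_eq_abs, ← mul_div_cancel_right₀ L hpos.ne', ← sub_div, abs_div, abs_of_pos hpos]
  gcongr

theorem exists_pos_bounds_of_tendsto_nhdsLT {φ : ℝ → ℝ} {t₀ T L : ℝ}
    (hφ : ContinuousOn φ (Ico t₀ T)) (hpos : ∀ t ∈ Ico t₀ T, 0 < φ t) (hL : 0 < L)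
    (hlim : Tendsto φ (𝓝[<] T) (𝓝 L)) :
    ∃ C₁ > (0 : ℝ), ∃ C₂ > (0 : ℝ), ∀ t ∈ Ico t₀ T, C₁ ≤ φ t ∧ φ t ≤ C₂ := by
  obtain ⟨l, hlT, hnear⟩ := mem_nhdsLT_iff_exists_Ioo_subset.mp
    (hlim.eventually (Ioo_mem_nhds (half_lt_self hL) (lt_two_mul_self hL)))
  have hK : Icc t₀ l ⊆ Ico t₀ T := Icc_subset_Ico_right hlT
  obtain ⟨c₁, hc₁, c₂, hc₂, hfar⟩ : ∃ c₁ > (0 : ℝ), ∃ c₂ > (0 : ℝ), ∀ t ∈ Icc t₀ l,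
      c₁ ≤ φ t ∧ φ t ≤ c₂ := by
    rcases (Icc t₀ l).eq_empty_or_nonempty with hempty | hne
    · exact ⟨1, one_pos, 1, one_pos, by simp [hempty]⟩
    obtain ⟨tm, htm, hmin⟩ := isCompact_Icc.exists_isMinOn hne (hφ.mono hK)
    obtain ⟨tM, -, hmax⟩ := isCompact_Icc.exists_isMaxOn hne (hφ.mono hK)
    exact ⟨φ tm, hpos tm (hK htm), φ tM, (hpos tm (hK htm)).trans_le (hmax htm),
      fun t ht => ⟨hmin ht, hmax ht⟩⟩
  refine ⟨min c₁ (L / 2), lt_min hc₁ (half_pos hL), max c₂ (2 * L), lt_max_of_lt_left hc₂,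
    fun t ht => ?_⟩
  rcases le_or_gt t l with htl | hlt
  · obtain ⟨h₁, h₂⟩ := hfar t ⟨ht.1, htl⟩
    exact ⟨(min_le_left _ _).trans h₁, h₂.trans (le_max_left _ _)⟩
  · obtain ⟨h₁, h₂⟩ := hnear ⟨hlt, ht.2⟩
    exact ⟨(min_le_right _ _).trans h₁.le, h₂.le.trans (le_max_right _ _)⟩

theorem rpow_bounds_of_rpow_neg_bounds {x d c₁ c₂ α : ℝ} (hα : 0 < α) (hx : 0 < x)
    (hd : 0 < d) (hc₁ : 0 < c₁) (h₁ : c₁ * d ≤ x ^ (-α)) (h₂ : x ^ (-α) ≤ c₂ * d) :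
    c₂ ^ (-1 / α) * d ^ (-1 / α) ≤ x ∧ x ≤ c₁ ^ (-1 / α) * d ^ (-1 / α) := by
  have hinv : (x ^ (-α)) ^ (-1 / α) = x := by
    rw [← Real.rpow_mul hx.le, show -α * (-1 / α) = 1 by field_simp, Real.rpow_one]
  have hexp : -1 / α ≤ 0 := div_nonpos_of_nonpos_of_nonneg (by norm_num) hα.le
  have hc₂ : 0 < c₂ := pos_of_mul_pos_left ((mul_pos hc₁ hd).trans_le (h₁.trans h₂)) hd.le
  rw [← Real.mul_rpow hc₂.le hd.le, ← Real.mul_rpow hc₁.le hd.le]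
  constructor
  · simpa only [hinv] using Real.rpow_le_rpow_of_nonpos (Real.rpow_pos_of_pos hx _) h₂ hexp
  · simpa only [hinv] using Real.rpow_le_rpow_of_nonpos (by positivity) h₁ hexp

theorem HasDerivAt.norm_rpow_neg {E : Type*} [NormedAddCommGroup E] [InnerProductSpace ℝ E]
    {y : ℝ → E} {y' : E} {t : ℝ} (α : ℝ) (hy : y t ≠ 0) (hd : HasDerivAt y y' t) :
    HasDerivAt (fun s => ‖y s‖ ^ (-α)) (-α * ⟪y t, y'⟫ * ‖y t‖ ^ (-(α + 2))) t := by
  have hpos : 0 < ‖y t‖ := norm_pos_iff.mpr hy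
  have hsq : (fun s => ‖y s‖ ^ (-α)) = fun s => (‖y s‖ ^ 2) ^ (-α / 2) := by
    funext s
    rw [← Real.rpow_natCast, ← Real.rpow_mul (norm_nonneg _)]
    congr 1
    ring
  have hexp : (‖y t‖ ^ 2) ^ (-α / 2 - 1) = ‖y t‖ ^ (-(α + 2)) := by
    rw [← Real.rpow_natCast, ← Real.rpow_mul (norm_nonneg _)]
    ring_nf
  rw [hsq]
  convert hd.norm_sq.rpow_const (p := -α / 2) (Or.inl (by positivity)) using 1
  rw [hexp]
  ring

theorem inner_smul_add_mul_rpow {E : Type*} [NormedAddCommGroup E] [InnerProductSpace ℝ E]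
    {x v : E} (hx : x ≠ 0) (a α : ℝ) :
    ⟪x, (a * ‖x‖ ^ α) • x + v⟫ * ‖x‖ ^ (-(α + 2)) = a + ⟪x, v⟫ * ‖x‖ ^ (-(α + 2)) := by
  have hpos : 0 < ‖x‖ := norm_pos_iff.mpr hx
  have hcancel : ‖x‖ ^ α * ‖x‖ ^ 2 * ‖x‖ ^ (-(α + 2)) = 1 := by
    rw [← Real.rpow_natCast, ← Real.rpow_add hpos, ← Real.rpow_add hpos]
    norm_num
  rw [inner_add_right, real_inner_smul_right, real_inner_self_eq_norm_sq]
  linear_combination a * hcancel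

theorem abs_inner_mul_rpow_le {E : Type*} [NormedAddCommGroup E] [InnerProductSpace ℝ E]
    {x v : E} (hx : x ≠ 0) {α e : ℝ} (hv : ‖v‖ ≤ ‖x‖ ^ (1 + α) * e) :
    |⟪x, v⟫ * ‖x‖ ^ (-(α + 2))| ≤ e := by
  have hpos : 0 < ‖x‖ := norm_pos_iff.mpr hx
  have hcancel : ‖x‖ ^ (1 + α) * ‖x‖ ^ (-(α + 2)) * ‖x‖ = 1 := by
    rw [← Real.rpow_add hpos, show 1 + α + -(α + 2) = -1 by ring, Real.rpow_neg_one,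
      inv_mul_cancel₀ hpos.ne']
  calc |⟪x, v⟫ * ‖x‖ ^ (-(α + 2))| = |⟪x, v⟫| * ‖x‖ ^ (-(α + 2)) := by
        rw [abs_mul, abs_of_pos (Real.rpow_pos_of_pos hpos _)]
    _ ≤ ‖x‖ * (‖x‖ ^ (1 + α) * e) * ‖x‖ ^ (-(α + 2)) := by
        gcongr
        exact (abs_real_inner_le_norm x v).trans (by gcongr)
    _ = e := by linear_combination e * hcancel

theorem hasDerivAt_norm_rpow_neg_of_hasDerivAt {E : Type*} [NormedAddCommGroup E]
    [InnerProductSpace ℝ E] {y : ℝ → E} {v : E} {t a α : ℝ} (hy : y t ≠ 0)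
    (hd : HasDerivAt y ((a * ‖y t‖ ^ α) • y t + v) t) :
    HasDerivAt (fun s => ‖y s‖ ^ (-α)) (-(α * a) - α * (⟪y t, v⟫ * ‖y t‖ ^ (-(α + 2)))) t := by
  convert hd.norm_rpow_neg α hy using 1
  rw [mul_assoc, inner_smul_add_mul_rpow hy]
  ring

theorem abs_norm_rpow_neg_sub_le_integral {V : Type*} [NormedAddCommGroup V]
    [InnerProductSpace ℝ V] {y f : ℝ → V} {E₀ : ℝ → ℝ} {α a s T : ℝ} (hα : 0 < α) (hs : s < T)
    (hycont : ContinuousOn y (Ico s T)) (hy0 : ∀ t ∈ Ico s T, y t ≠ 0)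
    (hblow : Tendsto (fun t => ‖y t‖) (𝓝[<] T) atTop)
    (hode : ∀ t ∈ Ioo s T, HasDerivAt y ((a * ‖y t‖ ^ α) • y t + f t) t)
    (hfE : ∀ t ∈ Ioo s T, ‖f t‖ ≤ ‖y t‖ ^ (1 + α) * E₀ t) (hE₀ : IntegrableOn E₀ (Ioo s T)) :
    |‖y s‖ ^ (-α) - α * a * (T - s)| ≤ α * ∫ τ in Ioo s T, E₀ τ := by
  set ρ : ℝ → ℝ := fun t => ⟪y t, f t⟫ * ‖y t‖ ^ (-(α + 2))
  have hy0' : ∀ t ∈ Ioo s T, y t ≠ 0 := fun t ht => hy0 t (Ioo_subset_Ico_self ht)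
  have hcont : ContinuousOn (fun t => ‖y t‖ ^ (-α) - α * a * (T - t)) (Ico s T) :=
    (hycont.norm.rpow_const fun t ht => Or.inl (norm_ne_zero_iff.mpr (hy0 t ht))).sub
      (by fun_prop)
  have hderiv : ∀ t ∈ Ioo s T,
      HasDerivAt (fun t => ‖y t‖ ^ (-α) - α * a * (T - t)) (-α * ρ t) t := fun t ht =>
    ((hasDerivAt_norm_rpow_neg_of_hasDerivAt (hy0' t ht) (hode t ht)).sub
      (((hasDerivAt_id t).const_sub T).const_mul (α * a))).congr_deriv (by ring)
  have hbound : ∀ t ∈ Ioo s T, |-α * ρ t| ≤ α * E₀ t := fun t ht => by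
    rw [abs_mul, abs_neg, abs_of_pos hα]
    exact mul_le_mul_of_nonneg_left (abs_inner_mul_rpow_le (hy0' t ht) (hfE t ht)) hα.le
  have hlim : Tendsto (fun t => ‖y t‖ ^ (-α) - α * a * (T - t)) (𝓝[<] T) (𝓝 0) := by
    have hlin : Tendsto (fun t => α * a * (T - t)) (𝓝[<] T) (𝓝 0) :=
      ((by fun_prop : Continuous fun t => α * a * (T - t)).tendsto' T 0 (by simp)).mono_left
        nhdsWithin_le_nhds
    have hg : Tendsto (fun t => ‖y t‖ ^ (-α)) (𝓝[<] T) (𝓝 0) :=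
      (tendsto_rpow_neg_atTop hα).comp hblow
    simpa only [sub_zero] using hg.sub hlin
  have := abs_sub_le_setIntegral_of_tendsto_nhdsLT hs hcont hderiv hbound (hE₀.const_mul α) hlim
  rwa [sub_zero, integral_const_mul] at this

theorem stmt_11_general {n : ℕ} (α a t₀ T : ℝ) (hα : 0 < α) (ha : 0 < a)
    (hT : t₀ < T)
    (y f : ℝ → EuclideanSpace ℝ (Fin n)) (E₀ : ℝ → ℝ)
    (hycont : ContinuousOn y (Ico t₀ T))
    (hy0 : ∀ t ∈ Ico t₀ T, y t ≠ 0)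
    (hblow : Tendsto (fun t => ‖y t‖) (𝓝[<] T) atTop)
    (hode : ∀ t ∈ Ioo t₀ T, HasDerivAt y ((a * ‖y t‖ ^ α) • y t + f t) t)
    (hfE : ∀ t ∈ Ico t₀ T, ‖f t‖ ≤ ‖y t‖ ^ (1 + α) * E₀ t)
    (hE0int : IntegrableOn E₀ (Ico t₀ T))
    (havg : Tendsto (fun t => (1 / (T - t)) * ∫ τ in Ico t T, E₀ τ) (𝓝[<] T) (𝓝 0)) :
    ∃ C₁ > (0:ℝ), ∃ C₂ > (0:ℝ), ∀ t ∈ Ico t₀ T,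
      C₁ * (T - t) ^ (-(1:ℝ)/α) ≤ ‖y t‖ ∧ ‖y t‖ ≤ C₂ * (T - t) ^ (-(1:ℝ)/α) := by
  have hdev : ∀ s ∈ Ioo t₀ T,
      |‖y s‖ ^ (-α) - α * a * (T - s)| ≤ α * ∫ τ in Ico s T, E₀ τ := fun s hs => by
    have hsub : Ico s T ⊆ Ico t₀ T := Ico_subset_Ico_left hs.1.le
    rw [integral_Ico_eq_integral_Ioo]
    exact abs_norm_rpow_neg_sub_le_integral hα hs.2 (hycont.mono hsub)
      (fun t ht => hy0 t (hsub ht)) hblow (fun t ht => hode t (Ioo_subset_Ioo_left hs.1.le ht))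
      (fun t ht => hfE t (hsub (Ioo_subset_Ico_self ht)))
      (hE0int.mono_set (Ioo_subset_Ico_self.trans hsub))
  have hratio : Tendsto (fun s => ‖y s‖ ^ (-α) / (T - s)) (𝓝[<] T) (𝓝 (α * a)) := by
    have havg' := havg.const_mul α
    rw [mul_zero] at havg'
    exact tendsto_div_of_abs_sub_mul_le (eventually_of_mem (Ioo_mem_nhdsLT hT) hdev)
      (havg'.congr fun t => by ring)
  have hcont : ContinuousOn (fun s => ‖y s‖ ^ (-α) / (T - s)) (Ico t₀ T) :=
    (hycont.norm.rpow_const fun t ht => Or.inl (norm_ne_zero_iff.mpr (hy0 t ht))).div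
      (by fun_prop) fun t ht => (sub_pos.mpr ht.2).ne'
  obtain ⟨c₁, hc₁, c₂, hc₂, hbounds⟩ := exists_pos_bounds_of_tendsto_nhdsLT hcont
    (fun t ht => div_pos (Real.rpow_pos_of_pos (norm_pos_iff.mpr (hy0 t ht)) _) (sub_pos.mpr ht.2))
    (mul_pos hα ha) hratio
  refine ⟨c₂ ^ (-1 / α), Real.rpow_pos_of_pos hc₂ _, c₁ ^ (-1 / α), Real.rpow_pos_of_pos hc₁ _,
    fun t ht => ?_⟩
  have hd : 0 < T - t := sub_pos.mpr ht.2
  obtain ⟨h₁, h₂⟩ := hbounds t ht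
  exact rpow_bounds_of_rpow_neg_bounds hα (norm_pos_iff.mpr (hy0 t ht)) hd hc₁
    ((le_div_iff₀ hd).mp h₁) ((div_le_iff₀ hd).mp h₂)

theorem stmt_11 {n : ℕ} (α a t₀ T : ℝ) (hα : 0 < α) (ha : 0 < a)
    (h0 : 0 ≤ t₀) (hT : t₀ < T)
    (y f : ℝ → EuclideanSpace ℝ (Fin n)) (E₀ : ℝ → ℝ)
    (hycont : ContinuousOn y (Ico t₀ T))
    (hy0 : ∀ t ∈ Ico t₀ T, y t ≠ 0)
    (hblow : Tendsto (fun t => ‖y t‖) (𝓝[<] T) atTop)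
    (hode : ∀ t ∈ Ioo t₀ T, HasDerivAt y ((a * ‖y t‖ ^ α) • y t + f t) t)
    (hfcont : ContinuousOn f (Ico t₀ T))
    (hE0nn : ∀ t ∈ Ico t₀ T, 0 ≤ E₀ t)
    (hfE : ∀ t ∈ Ico t₀ T, ‖f t‖ ≤ ‖y t‖ ^ (1 + α) * E₀ t)
    (hE0int : IntegrableOn E₀ (Ico t₀ T))
    (havg : Tendsto (fun t => (1 / (T - t)) * ∫ τ in Ico t T, E₀ τ) (𝓝[<] T) (𝓝 0)) :
    ∃ C₁ > (0:ℝ), ∃ C₂ > (0:ℝ), ∀ t ∈ Ico t₀ T,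
      C₁ * (T - t) ^ (-(1:ℝ)/α) ≤ ‖y t‖ ∧ ‖y t‖ ≤ C₂ * (T - t) ^ (-(1:ℝ)/α) :=
  stmt_11_general α a t₀ T hα ha hT y f E₀ hycont hy0 hblow hode hfE hE0int havg
end

section
/- Let α, a > 0, 0 ≤ t₀ < T*, and suppose y ∈ C¹([t₀,T*), ℝⁿ) satisfies y(t) ≠ 0 for all t, |y(t)| → ∞ as t → T*⁻, and y' = a|y|^α y + f(t) on (t₀,T*), where f is continuous and |f(t)| ≤ |y(t)|^{1+α} E₀(t) with E₀ : [t₀,T*) → [0,∞) satisfying ∫_{t₀}^{T*} E₀(τ)/(T*−τ) dτ < ∞. Then the limit ξ* = lim_{t→T*⁻} (T*−t)^{1/α} y(t) exists, ξ* ≠ 0, |ξ*| = (αa)^{−1/α}, and |(T*−t)^{1/α} y(t) − ξ*| = O(E₁(t)) as t → T*⁻, where E₁(t) = ∫_t^{T*} E₀(τ)/(T*−τ) dτ. -/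
/-!
For `ρ = ‖y‖ ^ (-α)` the equation gives `ρ' = -αa + O(E₀)`, and `ρ → 0` at `T`; integrating back
from `T` yields `ρ s / (T - s) = αa + O(E₁ s)`. The radial part of the equation drops out of the
derivative of the direction `y / ‖y‖`, which is `‖y‖⁻¹` times the component of `f` orthogonal to
`y`; its size is at most `‖y‖ ^ α E₀ ≲ E₀ τ / (T - τ)`, so the direction converges at rate `O(E₁)`.
Finally `(T - s) ^ (1/α) • y s = (ρ s / (T - s)) ^ (-1/α) • (y s / ‖y s‖)`.
-/

open scoped Topology RealInnerProductSpace

open MeasureTheory Set Filter Asymptotics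

section TailIntegral

theorem tendsto_setIntegral_Ico_nhdsLT {E : Type*} [NormedAddCommGroup E] [NormedSpace ℝ E]
    {g : ℝ → E} {t₀ T : ℝ} (hT : t₀ < T) (hg : IntegrableOn g (Ico t₀ T)) :
    Tendsto (fun t => ∫ τ in Ico t T, g τ) (𝓝[<] T) (𝓝 0) := by
  have hvol : Tendsto (fun t => volume (Ico t T)) (𝓝[<] T) (𝓝 0) := by
    have h : Tendsto (fun t => T - t) (𝓝[<] T) (𝓝 0) := by
      rw [← sub_self T]
      exact ((continuous_const.sub continuous_id).tendsto T).mono_left nhdsWithin_le_nhds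
    simpa [Real.volume_Ico] using ENNReal.tendsto_ofReal h
  refine (((integrable_indicator_iff measurableSet_Ico).2 hg).tendsto_setIntegral_nhds_zero
    hvol).congr' ?_
  filter_upwards [Ioo_mem_nhdsLT hT] with t ht
  rw [setIntegral_indicator measurableSet_Ico, inter_eq_left.2 (Ico_subset_Ico_left ht.1.le)]

theorem IntegrableOn.of_div_sub {g : ℝ → ℝ} {t₀ T : ℝ}
    (hg : IntegrableOn (fun τ => g τ / (T - τ)) (Ico t₀ T)) : IntegrableOn g (Ico t₀ T) := by
  refine (hg.continuousOn_mul_of_subset (g := fun τ => T - τ) (by fun_prop) isCompact_Icc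
    measurableSet_Ico Ico_subset_Icc_self).congr_fun (fun τ hτ => ?_) measurableSet_Ico
  exact mul_div_cancel₀ _ (sub_pos.2 hτ.2).ne'

theorem setIntegral_Ico_le_mul_setIntegral_div {g : ℝ → ℝ} {s T : ℝ}
    (hg0 : ∀ τ ∈ Ico s T, 0 ≤ g τ) (hg : IntegrableOn (fun τ => g τ / (T - τ)) (Ico s T)) :
    ∫ τ in Ico s T, g τ ≤ (T - s) * ∫ τ in Ico s T, g τ / (T - τ) := by
  rw [← integral_const_mul]
  refine setIntegral_mono_on (IntegrableOn.of_div_sub hg) (hg.const_mul _) measurableSet_Ico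
    fun τ hτ => ?_
  rw [mul_div_assoc', le_div_iff₀ (sub_pos.2 hτ.2)]
  nlinarith [hτ.1, hg0 τ hτ]

theorem setIntegral_Ico_div_sub_nonneg {g : ℝ → ℝ} {s T : ℝ} (hg : ∀ τ ∈ Ico s T, 0 ≤ g τ) :
    0 ≤ ∫ τ in Ico s T, g τ / (T - τ) :=
  setIntegral_nonneg measurableSet_Ico fun τ hτ => div_nonneg (hg τ hτ) (sub_nonneg.2 hτ.2.le)

end TailIntegral

section Limits

variable {E : Type*} [NormedAddCommGroup E]

theorem norm_sub_le_setIntegral_Ico_of_hasDerivAt [NormedSpace ℝ E] {F F' : ℝ → E}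
    {G : ℝ → ℝ} {s b T : ℝ} (hsb : s ≤ b) (hbT : b < T)
    (hF : ∀ t ∈ Ico s T, HasDerivAt F (F' t) t) (hG : IntegrableOn G (Ico s T))
    (hFG : ∀ t ∈ Ico s T, ‖F' t‖ ≤ G t) :
    ‖F b - F s‖ ≤ ∫ t in Ico s T, G t := by
  have hIcc : Icc s b ⊆ Ico s T := Icc_subset_Ico_right hbT
  have hIoo : Ioo s b ⊆ Ico s T := Ioo_subset_Icc_self.trans hIcc
  have hIoc : Ioc s b ⊆ Ico s T := Ioc_subset_Icc_self.trans hIcc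
  calc ‖F b - F s‖ ≤ ∫ t in s..b, G t :=
        norm_sub_le_integral_of_norm_deriv_le_of_le hsb
          (fun t ht => (hF t (hIcc ht)).continuousAt.continuousWithinAt)
          (fun t ht => (hF t (hIoo ht)).differentiableAt.differentiableWithinAt)
          (ae_of_all _ fun t ht => (hF t (hIoo ht)).deriv ▸ hFG t (hIoo ht))
          ((intervalIntegrable_iff_integrableOn_Ioc_of_le hsb).2 (hG.mono_set hIoc))
    _ = ∫ t in Ioc s b, G t := intervalIntegral.integral_of_le hsb
    _ ≤ ∫ t in Ico s T, G t :=
        setIntegral_mono_set hG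
          ((ae_restrict_iff' measurableSet_Ico).2 (ae_of_all _ fun t ht =>
            (norm_nonneg _).trans (hFG t ht)))
          hIoc.eventuallyLE

theorem norm_sub_le_of_tendsto_nhdsLT {F : ℝ → E} {L : E} {s T B : ℝ} (hs : s < T)
    (hF : Tendsto F (𝓝[<] T) (𝓝 L)) (hB : ∀ b ∈ Ioo s T, ‖F b - F s‖ ≤ B) :
    ‖L - F s‖ ≤ B :=
  le_of_tendsto ((hF.sub_const (F s)).norm) (eventually_of_mem (Ioo_mem_nhdsLT hs) hB)

theorem exists_tendsto_nhdsLT_of_norm_sub_le [CompleteSpace E] {F : ℝ → E} {Φ : ℝ → ℝ}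
    {t₁ T : ℝ} (hT : t₁ < T) (hΦ : Tendsto Φ (𝓝[<] T) (𝓝 0))
    (hF : ∀ s ∈ Ico t₁ T, ∀ b ∈ Ioo s T, ‖F b - F s‖ ≤ Φ s) :
    ∃ L, Tendsto F (𝓝[<] T) (𝓝 L) := by
  refine cauchy_map_iff_exists_tendsto.1 (Metric.cauchy_iff.2 ⟨map_neBot, fun ε hε => ?_⟩)
  have hsmall : ∀ᶠ s in 𝓝[<] T, s ∈ Ico t₁ T ∧ Φ s < ε := by
    filter_upwards [Ico_mem_nhdsLT hT, hΦ.eventually (gt_mem_nhds hε)] with s hs hsε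
    exact ⟨hs, hsε⟩
  refine ⟨F '' {s | s ∈ Ico t₁ T ∧ Φ s < ε}, image_mem_map hsmall, ?_⟩
  have hdist : ∀ s ∈ {s | s ∈ Ico t₁ T ∧ Φ s < ε}, ∀ b ∈ {s | s ∈ Ico t₁ T ∧ Φ s < ε},
      s ≤ b → dist (F b) (F s) < ε := by
    rintro s ⟨hs, hsε⟩ b ⟨hb, -⟩ hsb
    rcases hsb.eq_or_lt with rfl | hsb
    · simpa using hε
    · rw [dist_eq_norm]
      exact (hF s hs b ⟨hsb, hb.2⟩).trans_lt hsε
  rintro _ ⟨s, hs, rfl⟩ _ ⟨b, hb, rfl⟩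
  rcases le_total s b with hsb | hbs
  · exact dist_comm (F s) (F b) ▸ hdist s hs b hb hsb
  · exact hdist b hb s hs hbs

theorem exists_tendsto_nhdsLT_of_norm_deriv_le [NormedSpace ℝ E] [CompleteSpace E]
    {u u' : ℝ → E} {G : ℝ → ℝ} {t₁ T : ℝ} (hT : t₁ < T)
    (hu : ∀ t ∈ Ico t₁ T, HasDerivAt u (u' t) t) (hG : IntegrableOn G (Ico t₁ T))
    (huG : ∀ t ∈ Ico t₁ T, ‖u' t‖ ≤ G t) :
    ∃ u₀, Tendsto u (𝓝[<] T) (𝓝 u₀) ∧ ∀ s ∈ Ico t₁ T, ‖u₀ - u s‖ ≤ ∫ t in Ico s T, G t := by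
  have hbound : ∀ s ∈ Ico t₁ T, ∀ b ∈ Ioo s T, ‖u b - u s‖ ≤ ∫ t in Ico s T, G t :=
    fun s hs b hb =>
      have hsub : Ico s T ⊆ Ico t₁ T := Ico_subset_Ico_left hs.1
      norm_sub_le_setIntegral_Ico_of_hasDerivAt hb.1.le hb.2 (fun t ht => hu t (hsub ht))
        (hG.mono_set hsub) (fun t ht => huG t (hsub ht))
  obtain ⟨u₀, hu₀⟩ :=
    exists_tendsto_nhdsLT_of_norm_sub_le hT (tendsto_setIntegral_Ico_nhdsLT hT hG) hbound
  exact ⟨u₀, hu₀, fun s hs => norm_sub_le_of_tendsto_nhdsLT hs.2 hu₀ (hbound s hs)⟩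

theorem abs_sub_mul_sub_le_setIntegral_Ico {ρ g G : ℝ → ℝ} {c s T : ℝ} (hs : s < T)
    (hρ : ∀ t ∈ Ico s T, HasDerivAt ρ (g t - c) t) (hG : IntegrableOn G (Ico s T))
    (hgG : ∀ t ∈ Ico s T, |g t| ≤ G t) (hlim : Tendsto ρ (𝓝[<] T) (𝓝 0)) :
    |ρ s - c * (T - s)| ≤ ∫ t in Ico s T, G t := by
  have hF : ∀ t ∈ Ico s T, HasDerivAt (fun t => ρ t + c * t) (g t) t := fun t ht =>
    ((hρ t ht).add ((hasDerivAt_id' t).const_mul c)).congr_deriv (by ring)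
  have hFlim : Tendsto (fun t => ρ t + c * t) (𝓝[<] T) (𝓝 (0 + c * T)) :=
    hlim.add ((tendsto_id.mono_left nhdsWithin_le_nhds).const_mul c)
  have h := norm_sub_le_of_tendsto_nhdsLT hs hFlim fun b hb =>
    norm_sub_le_setIntegral_Ico_of_hasDerivAt hb.1.le hb.2 hF hG hgG
  rw [Real.norm_eq_abs] at h
  rw [abs_sub_comm]
  convert h using 2
  ring

end Limits

section InnerProductCalculus

variable {F : Type*} [NormedAddCommGroup F] [InnerProductSpace ℝ F]

theorem HasDerivAt.norm_rpow {y : ℝ → F} {y' : F} {t : ℝ} (hy : HasDerivAt y y' t)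
    (h0 : y t ≠ 0) (p : ℝ) :
    HasDerivAt (fun s => ‖y s‖ ^ p) (p * ‖y t‖ ^ (p - 2) * ⟪y t, y'⟫) t := by
  have hsq : ∀ (v : F) (q : ℝ), ‖v‖ ^ q = (‖v‖ ^ 2) ^ (q / 2) := fun v q => by
    rw [← Real.rpow_natCast, ← Real.rpow_mul (norm_nonneg v)]; ring_nf
  have h := hy.norm_sq.rpow_const (p := p / 2) (Or.inl (by positivity))
  convert h using 1
  · exact funext fun s => hsq (y s) p
  · rw [hsq (y t) (p - 2)]; ring_nf

theorem HasDerivAt.inv_norm_smul {y : ℝ → F} {y' : F} {t : ℝ} (hy : HasDerivAt y y' t)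
    (h0 : y t ≠ 0) :
    HasDerivAt (fun s => ‖y s‖⁻¹ • y s) (‖y t‖⁻¹ • (ℝ ∙ y t)ᗮ.starProjection y') t := by
  have h := (hy.norm_rpow h0 (-1)).smul hy
  simp only [Real.rpow_neg_one] at h
  convert h using 1
  · rfl
  rw [Submodule.starProjection_orthogonal_val, Submodule.starProjection_singleton,
    smul_sub, smul_smul, sub_eq_add_neg, ← neg_smul]
  congr 2
  rw [show (-1 : ℝ) - 2 = -(3 : ℕ) by norm_num, Real.rpow_neg (norm_nonneg _),
    Real.rpow_natCast, RCLike.ofReal_real_eq_id, id]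
  field_simp

theorem hasDerivAt_norm_rpow_neg_of_hasDerivAt_smul_add {y : ℝ → F} {v : F} {a α t : ℝ}
    (h0 : y t ≠ 0) (hy : HasDerivAt y ((a * ‖y t‖ ^ α) • y t + v) t) :
    HasDerivAt (fun s => ‖y s‖ ^ (-α)) (-α * ‖y t‖ ^ (-α - 2) * ⟪y t, v⟫ - α * a) t := by
  refine (hy.norm_rpow h0 (-α)).congr_deriv ?_
  have hpos : 0 < ‖y t‖ := norm_pos_iff.2 h0
  have hcancel : ‖y t‖ ^ (-α - 2) * ‖y t‖ ^ α * ‖y t‖ ^ 2 = 1 := by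
    rw [← Real.rpow_add hpos, ← Real.rpow_natCast, ← Real.rpow_add hpos]
    convert Real.rpow_zero ‖y t‖ using 2
    push_cast
    ring
  rw [inner_add_right, real_inner_smul_right, real_inner_self_eq_norm_sq]
  linear_combination (-α * a) * hcancel

theorem hasDerivAt_inv_norm_smul_of_hasDerivAt_smul_add {y : ℝ → F} {v : F} {b t : ℝ}
    (h0 : y t ≠ 0) (hy : HasDerivAt y (b • y t + v) t) :
    HasDerivAt (fun s => ‖y s‖⁻¹ • y s) (‖y t‖⁻¹ • (ℝ ∙ y t)ᗮ.starProjection v) t := by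
  have h := hy.inv_norm_smul h0
  rwa [map_add, map_smul, Submodule.starProjection_orthogonalComplement_singleton_eq_zero,
    smul_zero, zero_add] at h

theorem abs_rpow_mul_inner_le {x v : F} {α E : ℝ} (hα : 0 ≤ α) (hx : x ≠ 0)
    (hv : ‖v‖ ≤ ‖x‖ ^ (1 + α) * E) : |-α * ‖x‖ ^ (-α - 2) * ⟪x, v⟫| ≤ α * E := by
  have hpos : 0 < ‖x‖ := norm_pos_iff.2 hx
  have hcancel : ‖x‖ ^ (-α - 2) * ‖x‖ * ‖x‖ ^ (1 + α) = 1 := by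
    rw [mul_assoc, ← Real.rpow_one_add' hpos.le (by positivity), ← Real.rpow_add hpos]
    convert Real.rpow_zero ‖x‖ using 2
    ring
  calc |-α * ‖x‖ ^ (-α - 2) * ⟪x, v⟫| = α * ‖x‖ ^ (-α - 2) * |⟪x, v⟫| := by
        rw [abs_mul, abs_mul, abs_neg, abs_of_nonneg hα, abs_of_pos (by positivity)]
    _ ≤ α * ‖x‖ ^ (-α - 2) * (‖x‖ * (‖x‖ ^ (1 + α) * E)) := by
        gcongr
        exact (abs_real_inner_le_norm x v).trans (by gcongr)
    _ = α * E := by linear_combination α * E * hcancel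

theorem norm_inv_norm_smul_starProjection_le {x v : F} {α E : ℝ} (hx : x ≠ 0)
    (hv : ‖v‖ ≤ ‖x‖ ^ (1 + α) * E) :
    ‖‖x‖⁻¹ • (ℝ ∙ x)ᗮ.starProjection v‖ ≤ ‖x‖ ^ α * E := by
  have hpos : 0 < ‖x‖ := norm_pos_iff.2 hx
  calc ‖‖x‖⁻¹ • (ℝ ∙ x)ᗮ.starProjection v‖ ≤ ‖x‖⁻¹ * (‖x‖ ^ (1 + α) * E) := by
        rw [norm_smul, norm_inv, norm_norm]
        gcongr
        exact (Submodule.norm_starProjection_apply_le _ v).trans hv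
    _ = ‖x‖ ^ α * E := by
        rw [Real.rpow_add hpos, Real.rpow_one]
        field_simp

end InnerProductCalculus

section Asymptotics

theorem rpow_neg_div_rpow_neg_one_div {r d α : ℝ} (hr : 0 < r) (hd : 0 < d) (hα : α ≠ 0) :
    (r ^ (-α) / d) ^ (-1 / α) = d ^ (1 / α) * r := by
  rw [Real.div_rpow (by positivity) hd.le, ← Real.rpow_mul hr.le,
    show -α * (-1 / α) = 1 by field_simp, Real.rpow_one, show -1 / α = -(1 / α) by ring,
    Real.rpow_neg hd.le]
  field_simp

theorem isBigO_rpow_smul_sub {E ι : Type*} [NormedAddCommGroup E] [NormedSpace ℝ E]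
    {l : Filter ι} {q e : ι → ℝ} {u : ι → E} {c p : ℝ} {u₀ : E} (hc : 0 < c)
    (hqc : Tendsto q l (𝓝 c)) (hq : (fun i => q i - c) =O[l] e)
    (hu : (fun i => u i - u₀) =O[l] e) (hu1 : ∀ᶠ i in l, ‖u i‖ ≤ 1) :
    (fun i => q i ^ p • u i - c ^ p • u₀) =O[l] e := by
  have hrpow : (fun i => q i ^ p - c ^ p) =O[l] e :=
    ((Real.hasDerivAt_rpow_const (Or.inl hc.ne')).isBigO_sub.comp_tendsto hqc).trans hq
  have hbdd : u =O[l] (fun _ => (1 : ℝ)) := IsBigO.of_bound 1 (by simpa using hu1)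
  refine ((hrpow.smul hbdd).congr_right (fun i => by simp)).add
    (hu.const_smul_left (c ^ p)) |>.congr_left fun i => ?_
  simp only [Pi.smul_apply, smul_sub, sub_smul]
  abel

end Asymptotics

section BlowUp

variable {F : Type*} [NormedAddCommGroup F] [InnerProductSpace ℝ F]
  {y f : ℝ → F} {E₀ : ℝ → ℝ} {α a t₀ T : ℝ}

theorem abs_norm_rpow_neg_div_sub_le (hα : 0 < α) (hy0 : ∀ t ∈ Ico t₀ T, y t ≠ 0)
    (hblow : Tendsto (fun t => ‖y t‖) (𝓝[<] T) atTop)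
    (hode : ∀ t ∈ Ioo t₀ T, HasDerivAt y ((a * ‖y t‖ ^ α) • y t + f t) t)
    (hE0nn : ∀ t ∈ Ico t₀ T, 0 ≤ E₀ t)
    (hfE : ∀ t ∈ Ico t₀ T, ‖f t‖ ≤ ‖y t‖ ^ (1 + α) * E₀ t)
    (hE1int : IntegrableOn (fun τ => E₀ τ / (T - τ)) (Ico t₀ T)) {s : ℝ} (hs : s ∈ Ioo t₀ T) :
    |‖y s‖ ^ (-α) / (T - s) - α * a| ≤ α * ∫ τ in Ico s T, E₀ τ / (T - τ) := by
  have hsub : Ico s T ⊆ Ico t₀ T := Ico_subset_Ico_left hs.1.le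
  have hsub' : Ico s T ⊆ Ioo t₀ T := fun t ht => ⟨hs.1.trans_le ht.1, ht.2⟩
  have hTs : 0 < T - s := sub_pos.2 hs.2
  have hρ := abs_sub_mul_sub_le_setIntegral_Ico hs.2
    (fun t ht => hasDerivAt_norm_rpow_neg_of_hasDerivAt_smul_add (hy0 t (hsub ht))
      (hode t (hsub' ht)))
    (((IntegrableOn.of_div_sub hE1int).mono_set hsub).const_mul α)
    (fun t ht => abs_rpow_mul_inner_le hα.le (hy0 t (hsub ht)) (hfE t (hsub ht)))
    ((tendsto_rpow_neg_atTop hα).comp hblow)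
  have hE₀ := setIntegral_Ico_le_mul_setIntegral_div (fun τ hτ => hE0nn τ (hsub hτ))
    (hE1int.mono_set hsub)
  rw [integral_const_mul] at hρ
  rw [show ‖y s‖ ^ (-α) / (T - s) - α * a = (‖y s‖ ^ (-α) - α * a * (T - s)) / (T - s) by
    field_simp, abs_div, abs_of_pos hTs, div_le_iff₀ hTs]
  nlinarith

theorem exists_tendsto_inv_norm_smul [CompleteSpace F] (hy0 : ∀ t ∈ Ico t₀ T, y t ≠ 0)
    (hode : ∀ t ∈ Ioo t₀ T, HasDerivAt y ((a * ‖y t‖ ^ α) • y t + f t) t)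
    (hE0nn : ∀ t ∈ Ico t₀ T, 0 ≤ E₀ t)
    (hfE : ∀ t ∈ Ico t₀ T, ‖f t‖ ≤ ‖y t‖ ^ (1 + α) * E₀ t)
    (hE1int : IntegrableOn (fun τ => E₀ τ / (T - τ)) (Ico t₀ T)) {κ t₁ : ℝ} (hκ : 0 < κ)
    (ht₁ : t₀ < t₁) (ht₁T : t₁ < T) (hlow : ∀ s ∈ Ico t₁ T, κ ≤ ‖y s‖ ^ (-α) / (T - s)) :
    ∃ u₀, Tendsto (fun s => ‖y s‖⁻¹ • y s) (𝓝[<] T) (𝓝 u₀) ∧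
      ∀ s ∈ Ico t₁ T, ‖u₀ - ‖y s‖⁻¹ • y s‖ ≤ κ⁻¹ * ∫ τ in Ico s T, E₀ τ / (T - τ) := by
  have hsub : Ico t₁ T ⊆ Ioo t₀ T := fun t ht => ⟨ht₁.trans_le ht.1, ht.2⟩
  have hsub' : Ico t₁ T ⊆ Ico t₀ T := fun t ht => Ioo_subset_Ico_self (hsub ht)
  have hbound : ∀ t ∈ Ico t₁ T, ‖y t‖ ^ α * E₀ t ≤ κ⁻¹ * (E₀ t / (T - t)) := by
    intro t ht
    have hTt : 0 < T - t := sub_pos.2 ht.2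
    have hpow : 0 < ‖y t‖ ^ α := by have := hy0 t (hsub' ht); positivity
    have h := hlow t ht
    rw [Real.rpow_neg (norm_nonneg _), le_div_iff₀ hTt, le_inv_comm₀ (by positivity) hpow] at h
    calc ‖y t‖ ^ α * E₀ t ≤ (κ * (T - t))⁻¹ * E₀ t := by gcongr; exact hE0nn t (hsub' ht)
      _ = κ⁻¹ * (E₀ t / (T - t)) := by rw [mul_inv]; ring
  simpa only [integral_const_mul] using exists_tendsto_nhdsLT_of_norm_deriv_le ht₁T
    (fun t ht => hasDerivAt_inv_norm_smul_of_hasDerivAt_smul_add (hy0 t (hsub' ht))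
      (hode t (hsub ht)))
    ((hE1int.mono_set hsub').const_mul κ⁻¹)
    (fun t ht => (norm_inv_norm_smul_starProjection_le (hy0 t (hsub' ht))
      (hfE t (hsub' ht))).trans (hbound t ht))

theorem isBigO_norm_rpow_neg_div_sub (hα : 0 < α) (hT : t₀ < T)
    (hy0 : ∀ t ∈ Ico t₀ T, y t ≠ 0) (hblow : Tendsto (fun t => ‖y t‖) (𝓝[<] T) atTop)
    (hode : ∀ t ∈ Ioo t₀ T, HasDerivAt y ((a * ‖y t‖ ^ α) • y t + f t) t)
    (hE0nn : ∀ t ∈ Ico t₀ T, 0 ≤ E₀ t)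
    (hfE : ∀ t ∈ Ico t₀ T, ‖f t‖ ≤ ‖y t‖ ^ (1 + α) * E₀ t)
    (hE1int : IntegrableOn (fun τ => E₀ τ / (T - τ)) (Ico t₀ T)) :
    (fun s => ‖y s‖ ^ (-α) / (T - s) - α * a) =O[𝓝[<] T]
      fun s => ∫ τ in Ico s T, E₀ τ / (T - τ) := by
  refine IsBigO.of_bound α ?_
  filter_upwards [Ioo_mem_nhdsLT hT] with s hs
  rw [Real.norm_eq_abs, Real.norm_of_nonneg (setIntegral_Ico_div_sub_nonneg fun τ hτ =>
    hE0nn τ ⟨hs.1.le.trans hτ.1, hτ.2⟩)]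
  exact abs_norm_rpow_neg_div_sub_le hα hy0 hblow hode hE0nn hfE hE1int hs

theorem exists_isBigO_inv_norm_smul_sub [CompleteSpace F] (hT : t₀ < T)
    (hy0 : ∀ t ∈ Ico t₀ T, y t ≠ 0)
    (hode : ∀ t ∈ Ioo t₀ T, HasDerivAt y ((a * ‖y t‖ ^ α) • y t + f t) t)
    (hE0nn : ∀ t ∈ Ico t₀ T, 0 ≤ E₀ t)
    (hfE : ∀ t ∈ Ico t₀ T, ‖f t‖ ≤ ‖y t‖ ^ (1 + α) * E₀ t)
    (hE1int : IntegrableOn (fun τ => E₀ τ / (T - τ)) (Ico t₀ T)) {c : ℝ} (hc : 0 < c)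
    (hq : Tendsto (fun s => ‖y s‖ ^ (-α) / (T - s)) (𝓝[<] T) (𝓝 c)) :
    ∃ u₀ : F, ‖u₀‖ = 1 ∧
      (fun s => ‖y s‖⁻¹ • y s - u₀) =O[𝓝[<] T] fun s => ∫ τ in Ico s T, E₀ τ / (T - τ) := by
  obtain ⟨t₁, ht₁T, ht₁⟩ := mem_nhdsLT_iff_exists_Ico_subset.1
    (inter_mem (Ioo_mem_nhdsLT hT) (hq.eventually (lt_mem_nhds (half_lt_self hc))))
  have ht₀ : t₀ < t₁ := (ht₁ ⟨le_rfl, ht₁T⟩).1.1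
  obtain ⟨u₀, hu_lim, hu⟩ := exists_tendsto_inv_norm_smul hy0 hode hE0nn hfE hE1int
    (half_pos hc) ht₀ ht₁T fun s hs => (ht₁ hs).2.le
  have hnorm : ∀ᶠ s in 𝓝[<] T, ‖‖y s‖⁻¹ • y s‖ = 1 := by
    filter_upwards [Ioo_mem_nhdsLT hT] with s hs
    exact norm_smul_inv_norm (hy0 s (Ioo_subset_Ico_self hs))
  refine ⟨u₀, tendsto_nhds_unique hu_lim.norm (tendsto_const_nhds.congr' (hnorm.mono
    fun s hs => hs.symm)), IsBigO.of_bound (c / 2)⁻¹ ?_⟩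
  filter_upwards [Ico_mem_nhdsLT ht₁T] with s hs
  rw [norm_sub_rev, Real.norm_of_nonneg (setIntegral_Ico_div_sub_nonneg fun τ hτ =>
    hE0nn τ ⟨ht₀.le.trans (hs.1.trans hτ.1), hτ.2⟩)]
  exact hu s hs

end BlowUp

theorem stmt_12_general {n : ℕ} (α a t₀ T : ℝ) (hα : 0 < α) (ha : 0 < a)
    (hT : t₀ < T)
    (y f : ℝ → EuclideanSpace ℝ (Fin n)) (E₀ : ℝ → ℝ)
    (hy0 : ∀ t ∈ Ico t₀ T, y t ≠ 0)
    (hblow : Tendsto (fun t => ‖y t‖) (𝓝[<] T) atTop)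
    (hode : ∀ t ∈ Ioo t₀ T, HasDerivAt y ((a * ‖y t‖ ^ α) • y t + f t) t)
    (hE0nn : ∀ t ∈ Ico t₀ T, 0 ≤ E₀ t)
    (hfE : ∀ t ∈ Ico t₀ T, ‖f t‖ ≤ ‖y t‖ ^ (1 + α) * E₀ t)
    (hE1int : IntegrableOn (fun τ => E₀ τ / (T - τ)) (Ico t₀ T)) :
    ∃ ξ : EuclideanSpace ℝ (Fin n), ξ ≠ 0 ∧ ‖ξ‖ = (α * a) ^ (-(1:ℝ)/α) ∧
      Tendsto (fun t => (T - t) ^ ((1:ℝ)/α) • y t) (𝓝[<] T) (𝓝 ξ) ∧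
      ∃ C > (0:ℝ), ∀ᶠ t in 𝓝[<] T,
        ‖(T - t) ^ ((1:ℝ)/α) • y t - ξ‖ ≤ C * ∫ τ in Ico t T, E₀ τ / (T - τ) := by
  have hc : 0 < α * a := mul_pos hα ha
  have hE₁ := tendsto_setIntegral_Ico_nhdsLT hT hE1int
  have hqO := isBigO_norm_rpow_neg_div_sub hα hT hy0 hblow hode hE0nn hfE hE1int
  have hq : Tendsto (fun s => ‖y s‖ ^ (-α) / (T - s)) (𝓝[<] T) (𝓝 (α * a)) := by
    simpa using (hqO.trans_tendsto hE₁).add_const (α * a)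
  obtain ⟨u₀, hu₀, huO⟩ := exists_isBigO_inv_norm_smul_sub hT hy0 hode hE0nn hfE hE1int hc hq
  have hD : (fun s => (T - s) ^ ((1:ℝ)/α) • y s - (α * a) ^ (-(1:ℝ)/α) • u₀) =O[𝓝[<] T]
      fun s => ∫ τ in Ico s T, E₀ τ / (T - τ) := by
    refine (isBigO_rpow_smul_sub (p := -(1:ℝ)/α) hc hq hqO huO ?_).congr' ?_ EventuallyEq.rfl
    · filter_upwards [Ioo_mem_nhdsLT hT] with s hs
      exact (norm_smul_inv_norm (hy0 s (Ioo_subset_Ico_self hs))).le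
    · filter_upwards [Ioo_mem_nhdsLT hT] with s hs
      have hys := norm_pos_iff.2 (hy0 s (Ioo_subset_Ico_self hs))
      rw [smul_smul, rpow_neg_div_rpow_neg_one_div hys (sub_pos.2 hs.2) hα.ne', mul_assoc,
        mul_inv_cancel₀ hys.ne', mul_one]
  have hξ : ‖(α * a) ^ (-(1:ℝ)/α) • u₀‖ = (α * a) ^ (-(1:ℝ)/α) := by
    rw [norm_smul, hu₀, mul_one, Real.norm_of_nonneg (by positivity)]
  obtain ⟨C, hC, hCD⟩ := hD.exists_pos
  refine ⟨_, ne_zero_of_norm_ne_zero (by rw [hξ]; positivity), hξ,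
    tendsto_sub_nhds_zero_iff.1 (hD.trans_tendsto hE₁), C, hC, ?_⟩
  filter_upwards [hCD.bound, Ioo_mem_nhdsLT hT] with s hs hs'
  rwa [Real.norm_of_nonneg (setIntegral_Ico_div_sub_nonneg fun τ hτ =>
    hE0nn τ ⟨hs'.1.le.trans hτ.1, hτ.2⟩)] at hs

theorem stmt_12 {n : ℕ} (α a t₀ T : ℝ) (hα : 0 < α) (ha : 0 < a)
    (h0 : 0 ≤ t₀) (hT : t₀ < T)
    (y f : ℝ → EuclideanSpace ℝ (Fin n)) (E₀ : ℝ → ℝ)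
    (hycont : ContinuousOn y (Ico t₀ T))
    (hy0 : ∀ t ∈ Ico t₀ T, y t ≠ 0)
    (hblow : Tendsto (fun t => ‖y t‖) (𝓝[<] T) atTop)
    (hode : ∀ t ∈ Ioo t₀ T, HasDerivAt y ((a * ‖y t‖ ^ α) • y t + f t) t)
    (hfcont : ContinuousOn f (Ico t₀ T))
    (hE0nn : ∀ t ∈ Ico t₀ T, 0 ≤ E₀ t)
    (hfE : ∀ t ∈ Ico t₀ T, ‖f t‖ ≤ ‖y t‖ ^ (1 + α) * E₀ t)
    (hE1int : IntegrableOn (fun τ => E₀ τ / (T - τ)) (Ico t₀ T)) :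
    ∃ ξ : EuclideanSpace ℝ (Fin n), ξ ≠ 0 ∧ ‖ξ‖ = (α * a) ^ (-(1:ℝ)/α) ∧
      Tendsto (fun t => (T - t) ^ ((1:ℝ)/α) • y t) (𝓝[<] T) (𝓝 ξ) ∧
      ∃ C > (0:ℝ), ∀ᶠ t in 𝓝[<] T,
        ‖(T - t) ^ ((1:ℝ)/α) • y t - ξ‖ ≤ C * ∫ τ in Ico t T, E₀ τ / (T - τ) :=
  stmt_12_general α a t₀ T hα ha hT y f E₀ hy0 hblow hode hE0nn hfE hE1int
end

section
/- Let T* > 0, μ > 0, and let φ : [T, T*) → [0, 1] be absolutely continuous, H : [T,T*) → ℝ satisfy H(t) ≥ C₃(T*−t)^{−1} with C₃ > 0, and suppose φ' ≤ −μ H(t) φ + G(t) on (T, T*) with G ≥ 0 integrable near T*. Then for any t̄ < t < T*: φ(t) ≤ ((T*−t)/(T*−t̄))^{C₃μ} + ∫_{t̄}^{t} G(τ) dτ. In particular, if ∫_{t̄}^{T*} G(τ)dτ → 0 as t̄ → T*⁻, then φ(t) → 0 as t → T*⁻. -/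
open scoped Topology

open MeasureTheory Set Filter

/-!
Since `H ≥ C₃ / (T* - t)` and `φ ≥ 0`, the inequality becomes `φ' ≤ -κ φ / (T* - t) + G` with
`κ = C₃ μ`, whose integrating factor is `(T* - t) ^ (-κ)`. Integrating `(φ (T* - ·) ^ (-κ))' ≤
G (T* - ·) ^ (-κ)` from `t̄` to `t` and bounding the weight by its value at `t` gives
`φ t ≤ ((T* - t) / (T* - t̄)) ^ κ φ t̄ + ∫_{t̄}^{t} G`, and `φ t̄ ≤ 1`. For the limit, choose `t̄`
with a small tail of `G`, then `t` so close to `T*` that the power term is small.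
-/

section

variable {S κ : ℝ}

theorem hasDerivAt_sub_rpow_neg {x : ℝ} (hx : x < S) :
    HasDerivAt (fun y => (S - y) ^ (-κ)) (κ * (S - x)⁻¹ * (S - x) ^ (-κ)) x := by
  have hpos : 0 < S - x := sub_pos.2 hx
  convert ((hasDerivAt_id' x).const_sub S).rpow_const (p := -κ) (Or.inl hpos.ne') using 1
  rw [Real.rpow_sub_one hpos.ne']
  field_simp

theorem continuousOn_sub_rpow_neg {a b : ℝ} (hbS : b < S) :
    ContinuousOn (fun x => (S - x) ^ (-κ)) (Icc a b) :=
  (continuous_const.sub continuous_id).continuousOn.rpow_const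
    fun _ hx => Or.inl (sub_pos.2 (hx.2.trans_lt hbS)).ne'

theorem integral_mul_sub_rpow_neg_le {a b : ℝ} {G : ℝ → ℝ} (hκ : 0 ≤ κ) (hab : a ≤ b)
    (hbS : b < S) (hG : ∀ x ∈ Icc a b, 0 ≤ G x) (hGi : IntegrableOn G (Icc a b)) :
    ∫ x in a..b, G x * (S - x) ^ (-κ) ≤ (∫ x in a..b, G x) * (S - b) ^ (-κ) := by
  have hw := continuousOn_sub_rpow_neg (κ := κ) (a := a) hbS
  rw [← intervalIntegral.integral_mul_const]
  refine intervalIntegral.integral_mono_on hab ?_ ?_ fun x hx => ?_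
  · exact (intervalIntegrable_iff_integrableOn_Icc_of_le hab).2
      (hGi.mul_continuousOn hw isCompact_Icc)
  · exact (intervalIntegrable_iff_integrableOn_Icc_of_le hab).2 (hGi.mul_const _)
  · refine mul_le_mul_of_nonneg_left ?_ (hG x hx)
    exact Real.rpow_le_rpow_of_nonpos (sub_pos.2 hbS) (by linarith [hx.2]) (neg_nonpos.2 hκ)

theorem le_rpow_div_mul_add_integral_of_deriv_le {a b : ℝ} {φ d G : ℝ → ℝ} (hκ : 0 ≤ κ)
    (hab : a ≤ b) (hbS : b < S) (hφ : ContinuousOn φ (Icc a b))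
    (hφd : ∀ x ∈ Ioo a b, HasDerivAt φ (d x) x)
    (hd : ∀ x ∈ Ioo a b, d x ≤ -κ * (S - x)⁻¹ * φ x + G x)
    (hG : ∀ x ∈ Icc a b, 0 ≤ G x) (hGi : IntegrableOn G (Icc a b)) :
    φ b ≤ ((S - b) / (S - a)) ^ κ * φ a + ∫ x in a..b, G x := by
  have ha : 0 < S - a := by linarith
  have hb : 0 < S - b := sub_pos.2 hbS
  have hw := continuousOn_sub_rpow_neg (κ := κ) (a := a) hbS
  have hψ : φ b * (S - b) ^ (-κ) - φ a * (S - a) ^ (-κ) ≤ ∫ x in a..b, G x * (S - x) ^ (-κ) := by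
    refine intervalIntegral.sub_le_integral_of_hasDeriv_right_of_le hab (hφ.mul hw)
      (fun x hx => ((hφd x hx).mul (hasDerivAt_sub_rpow_neg (hx.2.trans hbS))).hasDerivWithinAt)
      (hGi.mul_continuousOn hw isCompact_Icc) fun x hx => ?_
    have hwx : 0 ≤ (S - x) ^ (-κ) := Real.rpow_nonneg (sub_pos.2 (hx.2.trans hbS)).le _
    nlinarith [mul_le_mul_of_nonneg_right (hd x hx) hwx]
  have hcmp := integral_mul_sub_rpow_neg_le hκ hab hbS hG hGi
  have hwb : (S - b) ^ (-κ) * (S - b) ^ κ = 1 := by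
    rw [← Real.rpow_add hb, neg_add_cancel, Real.rpow_zero]
  have hwa : (S - a) ^ (-κ) * (S - b) ^ κ = ((S - b) / (S - a)) ^ κ := by
    rw [Real.div_rpow hb.le ha.le, Real.rpow_neg ha.le, div_eq_inv_mul]
  have hpow : 0 ≤ (S - b) ^ κ := Real.rpow_nonneg hb.le κ
  calc φ b = φ b * (S - b) ^ (-κ) * (S - b) ^ κ := by rw [mul_assoc, hwb, mul_one]
    _ ≤ (φ a * (S - a) ^ (-κ) + (∫ x in a..b, G x) * (S - b) ^ (-κ)) * (S - b) ^ κ := by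
      gcongr; linarith
    _ = ((S - b) / (S - a)) ^ κ * φ a + ∫ x in a..b, G x := by
      rw [add_mul, mul_assoc, hwa, mul_assoc, hwb]; ring

theorem tendsto_sub_div_rpow_nhdsLT (hκ : 0 < κ) (c : ℝ) :
    Tendsto (fun t => ((S - t) / c) ^ κ) (𝓝[<] S) (𝓝 0) := by
  have h : Continuous fun t => ((S - t) / c) ^ κ :=
    ((continuous_const.sub continuous_id).div_const c).rpow_const fun _ => Or.inr hκ.le
  simpa [Real.zero_rpow hκ.ne'] using (h.tendsto S).mono_left nhdsWithin_le_nhds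

theorem intervalIntegral_le_integral_Ico {a t : ℝ} {G : ℝ → ℝ} (hat : a ≤ t) (htS : t < S)
    (hG : ∀ x ∈ Ico a S, 0 ≤ G x) (hGi : IntegrableOn G (Ico a S)) :
    ∫ x in a..t, G x ≤ ∫ x in Ico a S, G x := by
  rw [intervalIntegral.integral_of_le hat]
  exact setIntegral_mono_set hGi (ae_restrict_of_forall_mem measurableSet_Ico hG)
    (LE.le.eventuallyLE fun x hx => ⟨hx.1.le, hx.2.trans_lt htS⟩)

theorem tendsto_nhdsLT_zero_of_le_rpow_div_add_integral {T : ℝ} {φ G : ℝ → ℝ} (hTS : T < S)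
    (hκ : 0 < κ) (hφ : ∀ t ∈ Ico T S, 0 ≤ φ t) (hG : ∀ t ∈ Ico T S, 0 ≤ G t)
    (hGi : ∀ t ∈ Ico T S, IntegrableOn G (Ico t S))
    (hbound : ∀ tb ∈ Ico T S, ∀ t ∈ Ioo tb S,
      φ t ≤ ((S - t) / (S - tb)) ^ κ + ∫ τ in tb..t, G τ)
    (htail : Tendsto (fun tb => ∫ τ in Ico tb S, G τ) (𝓝[<] S) (𝓝 0)) :
    Tendsto φ (𝓝[<] S) (𝓝 0) := by
  refine tendsto_order.2 ⟨fun ε hε => ?_, fun ε hε => ?_⟩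
  · filter_upwards [Ioo_mem_nhdsLT_of_mem ⟨hTS, le_rfl⟩] with t ht
    exact hε.trans_le (hφ t ⟨ht.1.le, ht.2⟩)
  obtain ⟨tb, htb_tail, htb⟩ := ((htail.eventually (gt_mem_nhds (half_pos hε))).and
    (Ioo_mem_nhdsLT_of_mem ⟨hTS, le_rfl⟩)).exists
  have htbI : tb ∈ Ico T S := ⟨htb.1.le, htb.2⟩
  filter_upwards [(tendsto_sub_div_rpow_nhdsLT hκ (S - tb)).eventually
    (gt_mem_nhds (half_pos hε)), Ioo_mem_nhdsLT_of_mem ⟨htb.2, le_rfl⟩] with t hpow ht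
  have hint := intervalIntegral_le_integral_Ico ht.1.le ht.2
    (fun x hx => hG x ⟨htb.1.le.trans hx.1, hx.2⟩) (hGi tb htbI)
  linarith [hbound tb htbI t ht]

end

theorem stmt_18 (T Tstar μ C₃ : ℝ) (hT : T < Tstar) (hμ : 0 < μ) (hC₃ : 0 < C₃)
    (φ d Hh G : ℝ → ℝ)
    (hφcont : ContinuousOn φ (Ico T Tstar))
    (hφrange : ∀ t ∈ Ico T Tstar, φ t ∈ Icc (0:ℝ) 1)
    (hH : ∀ t ∈ Ico T Tstar, C₃ * (Tstar - t)⁻¹ ≤ Hh t)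
    (hG : ∀ t ∈ Ico T Tstar, 0 ≤ G t)
    (hGint : ∀ t ∈ Ico T Tstar, IntegrableOn G (Ico t Tstar))
    (hd : ∀ t ∈ Ioo T Tstar,
      HasDerivAt φ (d t) t ∧ d t ≤ -μ * Hh t * φ t + G t) :
    (∀ tb ∈ Ico T Tstar, ∀ t ∈ Ioo tb Tstar,
      φ t ≤ ((Tstar - t) / (Tstar - tb)) ^ (C₃ * μ) + ∫ τ in tb..t, G τ) ∧
    (Tendsto (fun tb => ∫ τ in Ico tb Tstar, G τ) (𝓝[<] Tstar) (𝓝 0) →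
      Tendsto φ (𝓝[<] Tstar) (𝓝 0)) := by
  have hκ : 0 < C₃ * μ := mul_pos hC₃ hμ
  have hdκ : ∀ x ∈ Ioo T Tstar, d x ≤ -(C₃ * μ) * (Tstar - x)⁻¹ * φ x + G x := fun x hx => by
    have hφx := (hφrange x (Ioo_subset_Ico_self hx)).1
    nlinarith [mul_le_mul_of_nonneg_right (hH x (Ioo_subset_Ico_self hx)) (mul_nonneg hμ.le hφx),
      (hd x hx).2]
  have hbound : ∀ tb ∈ Ico T Tstar, ∀ t ∈ Ioo tb Tstar,
      φ t ≤ ((Tstar - t) / (Tstar - tb)) ^ (C₃ * μ) + ∫ τ in tb..t, G τ := by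
    rintro tb htb t ⟨htbt, htS⟩
    have hsub : Icc tb t ⊆ Ico T Tstar := fun x hx => ⟨htb.1.trans hx.1, hx.2.trans_lt htS⟩
    have hIoo : Ioo tb t ⊆ Ioo T Tstar := Ioo_subset_Ioo htb.1 htS.le
    have hgr := le_rpow_div_mul_add_integral_of_deriv_le hκ.le htbt.le htS (hφcont.mono hsub)
      (fun x hx => (hd x (hIoo hx)).1) (fun x hx => hdκ x (hIoo hx)) (fun x hx => hG x (hsub hx))
      ((hGint tb htb).mono_set fun x hx => ⟨hx.1, hx.2.trans_lt htS⟩)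
    have hr : 0 ≤ ((Tstar - t) / (Tstar - tb)) ^ (C₃ * μ) :=
      Real.rpow_nonneg (div_nonneg (by linarith) (by linarith [htb.2])) _
    nlinarith [(hφrange tb htb).2]
  exact ⟨hbound, tendsto_nhdsLT_zero_of_le_rpow_div_add_integral hT hκ
    (fun t ht => (hφrange t ht).1) hG hGint hbound⟩
end
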